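/- For every integer r ≥ 2, a simple graph is r-uniformly (2r − 3)-11-representable if and only if it is an interval graph. -/

import Mathlib

/-- Number of occurrences of the consecutive pattern 11 in a word,
i.e. the number of positions `i` with `u i = u (i+1)`. -/
def pattern11Count {V : Type*} [DecidableEq V] (u : List V) : ℕ :=
  (u.zip u.tail).countP (fun p => decide (p.1 = p.2))

/-- `w` is a `k`-11-representant of the simple graph `G`: every vertex occurs in `w`,
and two distinct vertices are adjacent iff the subword of `w` induced by them contains
at most `k` occurrences of the consecutive pattern 11. -/
def IsK11Rep {V : Type*} [DecidableEq V] (G : SimpleGraph V) (k : ℕ) (w : List V) : Prop :=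
  (∀ v : V, v ∈ w) ∧
  ∀ x y : V, x ≠ y →
    (G.Adj x y ↔ pattern11Count (w.filter (fun a => decide (a = x ∨ a = y))) ≤ k)

/-- A simple graph is `k`-11-representable if it has a `k`-11-representant. -/
def K11Representable {V : Type*} [DecidableEq V] (G : SimpleGraph V) (k : ℕ) : Prop :=
  ∃ w : List V, IsK11Rep G k w

/-- A graph is `t`-uniformly `k`-11-representable if it has a `k`-11-representant in which
every vertex occurs exactly `t` times. -/
def UniformK11Rep {V : Type*} [DecidableEq V] (G : SimpleGraph V) (t k : ℕ) : Prop :=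
  ∃ w : List V, IsK11Rep G k w ∧ ∀ v : V, w.count v = t

/-- The final permutation `σ(w)`: distinct letters of `w` in order of last occurrence. -/
def finalPerm {V : Type*} [DecidableEq V] (w : List V) : List V := w.dedup

/-- The initial permutation `π(w)`: distinct letters of `w` in order of first occurrence. -/
def initPerm {V : Type*} [DecidableEq V] (w : List V) : List V := (w.reverse.dedup).reverse

/-- `G` is an interval graph: each vertex gets a nonempty closed real interval such that
distinct vertices are adjacent iff their intervals intersect. -/
def IsIntervalGraph {V : Type*} (G : SimpleGraph V) : Prop :=
  ∃ I : V → Set ℝ,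
    (∀ v : V, ∃ a b : ℝ, a ≤ b ∧ I v = Set.Icc a b) ∧
    ∀ u v : V, u ≠ v → (G.Adj u v ↔ (I u ∩ I v).Nonempty)

/-! If `x` and `y` each occur `r` times in `w`, the induced subword has length `2r`, so it has
at most `2r - 3` factors `11` exactly when it switches letters at least twice, that is, when some
`x` precedes some `y` and some `y` precedes some `x`. Reading each vertex as the interval from its
first to its last occurrence, this says that the two intervals meet. Conversely, given intervals
`[a v, b v]`, write `v` `r - 1` times at `a v` and once at `b v`, and sort these letters by
position, putting left endpoints before right endpoints at ties. -/

open List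

theorem pair_sublist_filter_iff {α : Type*} {p : α → Bool} {a b : α} {l : List α}
    (ha : p a) (hb : p b) : [a, b] <+ l.filter p ↔ [a, b] <+ l := by
  refine ⟨fun h => h.trans filter_sublist, fun h => ?_⟩
  simpa [ha, hb] using h.filter p

theorem pair_sublist_iff_exists_getElem? {α : Type*} {a b : α} {l : List α} :
    [a, b] <+ l ↔ ∃ i j : ℕ, i < j ∧ l[i]? = some a ∧ l[j]? = some b := by
  constructor
  · intro h
    obtain ⟨l₁, l₂, rfl, ha, hb⟩ := cons_sublist_iff.mp h
    obtain ⟨i, hi⟩ := mem_iff_getElem?.mp ha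
    obtain ⟨j, hj⟩ := mem_iff_getElem?.mp (singleton_sublist.mp hb)
    have hil : i < l₁.length := (List.getElem?_eq_some_iff.mp hi).1
    refine ⟨i, l₁.length + j, by omega, ?_, ?_⟩
    · rw [getElem?_append_left hil, hi]
    · rw [getElem?_append_right (by omega), Nat.add_sub_cancel_left, hj]
  · rintro ⟨i, j, hij, hi, hj⟩
    rw [← take_append_drop j l]
    refine cons_sublist_iff.mpr ⟨_, _, rfl, mem_iff_getElem?.mpr ⟨i, ?_⟩, ?_⟩
    · rw [getElem?_take, if_pos hij, hi]
    · refine singleton_sublist.mpr (mem_iff_getElem?.mpr ⟨0, ?_⟩)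
      rw [getElem?_drop, add_zero, hj]

theorem pair_sublist_of_key_lt {α β : Type*} [LinearOrder β] {key : α → β} {s : List α}
    (hs : s.Pairwise fun e f => key e ≤ key f) {e f : α} (he : e ∈ s) (hf : f ∈ s)
    (h : key e < key f) : [e, f] <+ s := by
  obtain ⟨s₁, s₂, rfl⟩ := append_of_mem he
  rcases mem_append.mp hf with hf | hf
  · exact absurd ((pairwise_append.mp hs).2.2 f hf e mem_cons_self) (not_le.mpr h)
  rcases mem_cons.mp hf with rfl | hf
  · exact absurd h (lt_irrefl _)
  · exact (cons_sublist_cons.mpr (singleton_sublist.mpr hf)).trans (sublist_append_right _ _)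

section

variable {V : Type*} [DecidableEq V] {x y : V} {u : List V}

theorem pattern11Count_cons (a : V) (l : List V) :
    pattern11Count (a :: l) = pattern11Count l + if l.head? = some a then 1 else 0 := by
  cases l with
  | nil => rfl
  | cons b t =>
    simp only [pattern11Count, tail_cons, zip_cons_cons, countP_cons, head?_cons, Option.some.injEq]
    simp [eq_comm]

theorem pattern11Count_replicate (n : ℕ) (a : V) : pattern11Count (replicate n a) = n - 1 := by
  induction n with
  | zero => rfl
  | succ n ih =>
    rw [replicate_succ, pattern11Count_cons, ih]
    cases n <;> simp [replicate_succ]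

theorem pattern11Count_add_le_append (l₁ l₂ : List V) :
    pattern11Count l₁ + pattern11Count l₂ ≤ pattern11Count (l₁ ++ l₂) := by
  induction l₁ with
  | nil => simp [pattern11Count]
  | cons a l ih =>
    rw [cons_append, pattern11Count_cons, pattern11Count_cons]
    have hhead :
        (if l.head? = some a then 1 else 0) ≤ if (l ++ l₂).head? = some a then 1 else 0 := by
      cases l <;> simp
    omega

theorem pattern11Count_add_three_le_length (hxy : x ≠ y)
    (hxy_mem : (x, y) ∈ u.zip u.tail) (hyx_mem : (y, x) ∈ u.zip u.tail) :
    pattern11Count u + 3 ≤ u.length := by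
  set changes := (u.zip u.tail).filter fun p => decide ¬p.1 = p.2
  have hpair : {(x, y), (y, x)} ⊆ changes.toFinset := by
    simp [Finset.insert_subset_iff, changes, hxy_mem, hyx_mem, hxy, Ne.symm hxy]
  have hcard := (Finset.card_le_card hpair).trans changes.toFinset_card_le
  rw [Finset.card_pair (by simp [hxy]), ← countP_eq_length_filter] at hcard
  have hlen :=
    length_eq_countP_add_countP (fun p : V × V => decide (p.1 = p.2)) (l := u.zip u.tail)
  rw [length_zip, length_tail] at hlen
  simp only [decide_eq_true_eq] at hlen
  unfold pattern11Count
  omega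

theorem length_eq_count_add_count (hxy : x ≠ y) (hu : ∀ a ∈ u, a = x ∨ a = y) :
    u.length = u.count x + u.count y := by
  rw [length_eq_countP_add_countP (· == x), count, count]
  congr 1
  refine countP_congr fun a ha => ?_
  rcases hu a ha with rfl | rfl <;> simp [hxy, Ne.symm hxy]

theorem eq_replicate_append_replicate_of_not_sublist (hxy : x ≠ y)
    (hu : ∀ a ∈ u, a = x ∨ a = y) (h : ¬[y, x] <+ u) :
    u = replicate (u.count x) x ++ replicate (u.count y) y := by
  induction u with
  | nil => rfl
  | cons a t ih =>
    have ht := ih (fun b hb => hu b (mem_cons_of_mem a hb)) fun hs => h (hs.cons a)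
    rcases hu a mem_cons_self with rfl | rfl
    · rw [count_cons_self, count_cons_of_ne hxy, replicate_succ, cons_append, ← ht]
    · have hxt : x ∉ t := fun hx => h (cons_sublist_cons.mpr (singleton_sublist.mpr hx))
      rw [count_cons_self, count_cons_of_ne (Ne.symm hxy), count_eq_zero.mpr hxt] at *
      simpa [replicate_succ] using ht

theorem mem_zip_tail_of_pair_sublist (hu : ∀ a ∈ u, a = x ∨ a = y) (h : [y, x] <+ u) :
    (y, x) ∈ u.zip u.tail := by
  induction u with
  | nil => simp at h
  | cons a t ih =>
    rcases t with _ | ⟨b, t⟩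
    · simp at h
    rw [tail_cons, zip_cons_cons, mem_cons]
    rcases sublist_cons_iff.mp h with hs | ⟨_, heq, hs⟩
    · exact Or.inr (ih (fun c hc => hu c (mem_cons_of_mem a hc)) hs)
    obtain ⟨rfl, rfl⟩ := cons.inj heq
    by_cases hb : b = x
    · exact Or.inl (by rw [hb])
    obtain rfl : b = y := (hu b (by simp)).resolve_left hb
    have hxt : x ∈ t := (mem_cons.mp (singleton_sublist.mp hs)).resolve_left (Ne.symm hb)
    exact Or.inr (ih (fun c hc => hu c (mem_cons_of_mem _ hc))
      (cons_sublist_cons.mpr (singleton_sublist.mpr hxt)))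

theorem count_sub_one_add_count_sub_one_le_pattern11Count (hxy : x ≠ y)
    (hu : ∀ a ∈ u, a = x ∨ a = y) (h : ¬[y, x] <+ u) :
    u.count x - 1 + (u.count y - 1) ≤ pattern11Count u := by
  rw [eq_replicate_append_replicate_of_not_sublist hxy hu h, count_append, count_append,
    count_replicate_self, count_replicate_self, count_replicate, count_replicate]
  simpa [hxy, Ne.symm hxy, pattern11Count_replicate] using
    pattern11Count_add_le_append (replicate (u.count x) x) (replicate (u.count y) y)

theorem pattern11Count_le_iff_pair_sublists {r : ℕ} (hr : 2 ≤ r) (hxy : x ≠ y)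
    (hu : ∀ a ∈ u, a = x ∨ a = y) (hx : u.count x = r) (hy : u.count y = r) :
    pattern11Count u ≤ 2 * r - 3 ↔ [x, y] <+ u ∧ [y, x] <+ u := by
  have hu' : ∀ a ∈ u, a = y ∨ a = x := fun a ha => (hu a ha).symm
  constructor
  · intro hle
    constructor <;> by_contra h
    · have := count_sub_one_add_count_sub_one_le_pattern11Count (Ne.symm hxy) hu' h
      omega
    · have := count_sub_one_add_count_sub_one_le_pattern11Count hxy hu h
      omega
  · rintro ⟨hxy_sub, hyx_sub⟩
    have := pattern11Count_add_three_le_length hxy (mem_zip_tail_of_pair_sublist hu' hxy_sub)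
      (mem_zip_tail_of_pair_sublist hu hyx_sub)
    rw [length_eq_count_add_count hxy hu] at this
    omega

theorem pattern11Count_filter_le_iff {r : ℕ} (hr : 2 ≤ r) (hxy : x ≠ y) {w : List V}
    (hx : w.count x = r) (hy : w.count y = r) :
    pattern11Count (w.filter fun a => decide (a = x ∨ a = y)) ≤ 2 * r - 3 ↔
      [x, y] <+ w ∧ [y, x] <+ w := by
  rw [pattern11Count_le_iff_pair_sublists hr hxy (fun a ha => by simpa using (mem_filter.mp ha).2)
    (by rw [count_filter (by simp), hx]) (by rw [count_filter (by simp), hy]),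
    pair_sublist_filter_iff (by simp) (by simp), pair_sublist_filter_iff (by simp) (by simp)]

theorem uniformK11Rep_iff {G : SimpleGraph V} {r : ℕ} (hr : 2 ≤ r) :
    UniformK11Rep G r (2 * r - 3) ↔ ∃ w : List V, (∀ v, w.count v = r) ∧
      ∀ x y, x ≠ y → (G.Adj x y ↔ [x, y] <+ w ∧ [y, x] <+ w) := by
  constructor
  · rintro ⟨w, ⟨-, hadj⟩, hcount⟩
    exact ⟨w, hcount, fun x y hxy => by
      rw [hadj x y hxy, pattern11Count_filter_le_iff hr hxy (hcount x) (hcount y)]⟩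
  · rintro ⟨w, hcount, hadj⟩
    have hmem : ∀ v, v ∈ w := fun v => count_pos_iff.mp (by rw [hcount v]; omega)
    refine ⟨w, ⟨hmem, fun x y hxy => ?_⟩, hcount⟩
    rw [hadj x y hxy, pattern11Count_filter_le_iff hr hxy (hcount x) (hcount y)]

theorem exists_endpoints_of_forall_mem {w : List V} (hw : ∀ v, v ∈ w) :
    ∃ a b : V → ℕ, (∀ v, a v ≤ b v) ∧
      ∀ x y, x ≠ y → ([x, y] <+ w ↔ a x ≤ b y) := by
  set P : V → Finset ℕ := fun v => {i ∈ Finset.range w.length | w[i]? = some v}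
  have hP : ∀ v i, i ∈ P v ↔ w[i]? = some v := fun v i => by
    simpa [P] using fun h => (List.getElem?_eq_some_iff.mp h).1
  have hne : ∀ v, (P v).Nonempty := fun v =>
    let ⟨i, hi⟩ := mem_iff_getElem?.mp (hw v)
    ⟨i, (hP v i).mpr hi⟩
  refine ⟨fun v => (P v).min' (hne v), fun v => (P v).max' (hne v),
    fun v => (P v).min'_le _ ((P v).max'_mem _), fun x y hxy => ?_⟩
  have hmin := (hP x _).mp ((P x).min'_mem (hne x))
  have hmax := (hP y _).mp ((P y).max'_mem (hne y))
  rw [pair_sublist_iff_exists_getElem?]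
  constructor
  · rintro ⟨i, j, hij, hi, hj⟩
    exact ((P x).min'_le i ((hP x i).mpr hi)).trans
      (hij.le.trans ((P y).le_max' j ((hP y j).mpr hj)))
  · refine fun h => ⟨_, _, lt_of_le_of_ne h fun heq => hxy ?_, hmin, hmax⟩
    beta_reduce at heq
    rw [heq, hmax] at hmin
    exact (Option.some.inj hmin).symm

end

section

variable {V : Type*} [Fintype V]

noncomputable def endpointEvents (r : ℕ) : List (V × Bool) :=
  Finset.univ.toList.flatMap fun v => replicate (r - 1) (v, false) ++ [(v, true)]

/-- `(v, false)` is a copy of `v` placed at `a v`, `(v, true)` the copy placed at `b v`; since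
`false < true`, left endpoints come first at ties. -/
def endpointKey (a b : V → ℝ) (e : V × Bool) : ℝ ×ₗ Bool :=
  toLex (if e.2 then b e.1 else a e.1, e.2)

noncomputable def intervalWord (r : ℕ) (a b : V → ℝ) : List V :=
  ((endpointEvents r).mergeSort fun e f => endpointKey a b e ≤ endpointKey a b f).map Prod.fst

theorem count_intervalWord [DecidableEq V] {r : ℕ} (hr : 1 ≤ r) (a b : V → ℝ) (v : V) :
    (intervalWord r a b).count v = r := by
  rw [intervalWord, ((mergeSort_perm _ _).map Prod.fst).count_eq, endpointEvents, map_flatMap,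
    count_flatMap, Finset.sum_map_toList]
  simp [count_replicate, count_singleton, Finset.sum_add_distrib]
  omega

theorem pair_sublist_intervalWord_iff {r : ℕ} (hr : 2 ≤ r) {a b : V → ℝ}
    (hab : ∀ v, a v ≤ b v) (x y : V) : [x, y] <+ intervalWord r a b ↔ a x ≤ b y := by
  set key := endpointKey a b
  have hkey : ∀ e, toLex (a e.1, false) ≤ key e ∧ key e ≤ toLex (b e.1, true) := by
    rintro ⟨v, _ | _⟩ <;> simp [key, endpointKey, Prod.Lex.toLex_le_toLex', hab]
  set s := (endpointEvents r).mergeSort fun e f => key e ≤ key f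
  have hs : s.Pairwise fun e f => key e ≤ key f := by
    simpa using pairwise_mergeSort (le := fun e f => key e ≤ key f)
      (fun _ _ _ h₁ h₂ => by
        simpa using (of_decide_eq_true h₁).trans (of_decide_eq_true h₂))
      (fun e f => by simpa using le_total (key e) (key f)) _
  have hmem : ∀ v c, (v, c) ∈ s := fun v c => by
    rw [(mergeSort_perm _ _).mem_iff]
    cases c <;> simp [endpointEvents]
    omega
  constructor
  · rw [intervalWord, sublist_map_iff]
    rintro ⟨l, hl, heq⟩
    rcases l with _ | ⟨e, _ | ⟨f, _ | _⟩⟩ <;>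
      simp only [map_cons, map_nil, cons.injEq, reduceCtorEq, and_false, and_true] at heq
    obtain ⟨rfl, rfl⟩ := heq
    have hef : key e ≤ key f :=
      (pairwise_pair (R := fun e f => key e ≤ key f)).mp (hs.sublist hl)
    exact (Prod.Lex.toLex_le_toLex'.mp (((hkey e).1.trans hef).trans (hkey f).2)).1
  · intro h
    refine (pair_sublist_of_key_lt hs (hmem x false) (hmem y true) ?_).map Prod.fst
    simp [key, endpointKey, Prod.Lex.toLex_lt_toLex', h]

end

theorem isIntervalGraph_iff {V : Type*} {G : SimpleGraph V} :
    IsIntervalGraph G ↔ ∃ a b : V → ℝ, (∀ v, a v ≤ b v) ∧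
      ∀ x y, x ≠ y → (G.Adj x y ↔ a x ≤ b y ∧ a y ≤ b x) := by
  have hIcc : ∀ {a b c d : ℝ}, a ≤ b → c ≤ d →
      ((Set.Icc a b ∩ Set.Icc c d).Nonempty ↔ a ≤ d ∧ c ≤ b) :=
    fun hab hcd => by simp [Set.Icc_inter_Icc, hab, hcd, and_comm]
  constructor
  · rintro ⟨I, hI, hadj⟩
    choose a b hab hIab using hI
    refine ⟨a, b, hab, fun x y hxy => ?_⟩
    rw [hadj x y hxy, hIab, hIab, hIcc (hab x) (hab y)]
  · rintro ⟨a, b, hab, hadj⟩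
    refine ⟨fun v => Set.Icc (a v) (b v), fun v => ⟨a v, b v, hab v, rfl⟩,
      fun x y hxy => ?_⟩
    rw [hadj x y hxy, hIcc (hab x) (hab y)]

/-- for every `r ≥ 2`, a graph is `r`-uniformly `(2r-3)`-11-representable
iff it is an interval graph. -/
theorem r_uniform_iff_intervalGraph {V : Type*} [DecidableEq V] [Fintype V]
    (r : ℕ) (hr : 2 ≤ r) (G : SimpleGraph V) :
    UniformK11Rep G r (2 * r - 3) ↔ IsIntervalGraph G := by
  rw [uniformK11Rep_iff hr, isIntervalGraph_iff]
  constructor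
  · rintro ⟨w, hcount, hadj⟩
    obtain ⟨a, b, hab, hsub⟩ :=
      exists_endpoints_of_forall_mem fun v => count_pos_iff.mp (by rw [hcount v]; omega)
    refine ⟨fun v => a v, fun v => b v, fun v => Nat.cast_le.mpr (hab v), fun x y hxy => ?_⟩
    rw [hadj x y hxy, hsub x y hxy, hsub y x (Ne.symm hxy), Nat.cast_le, Nat.cast_le]
  · rintro ⟨a, b, hab, hadj⟩
    refine ⟨intervalWord r a b, count_intervalWord (by omega) a b, fun x y hxy => ?_⟩
    rw [hadj x y hxy, pair_sublist_intervalWord_iff hr hab, pair_sublist_intervalWord_iff hr hab]
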